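/- Let m ≥ 1 be an integer, let α, α₁, α₂ ∈ ℝ, and let b_{n,l} (n ∈ ℕ, l ∈ {−1, 0, 1, …, m}) be real numbers with b_{n,−1} ≠ 0 for all n ≥ 1, satisfying for every n ≥ 1 the relation (m+1)α b_{n,−1} + α₁ b_{n,−1}(b_{n,0} − b_{n−1,0}) + α₂ b_{n,−1}(b_{n,1} b_{n+1,−1} + b_{n,0}(b_{n,0} + b_{n−1,0}) − b_{n−1,0}(b_{n−1,0} + b_{n,0}) − b_{n−1,−1} b_{n−2,1}) = 0 (with the convention b_{−1,1} given as part of the data). Then there exists a real constant A such that for all n ≥ 0: −α₂(b_{n+1,−1} b_{n,1} + b_{n,−1} b_{n−1,1} + b_{n,0}²) − α₁ b_{n,0} = (m+1) n α + A. -/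

import Mathlib

/-!
After division by `b_{n,−1}`, the relation says exactly that the left-hand side `F n` of the
first integral increases by `(m+1)α` from `n − 1` to `n`; summing these increments gives
`F n = (m+1) n α + F 0`.
-/

theorem Int.eq_mul_add_of_forall_sub_one {R : Type*} [Ring R] {F : ℤ → R} {c : R}
    (hF : ∀ n : ℤ, 1 ≤ n → F n = F (n - 1) + c) : ∀ n : ℤ, 0 ≤ n → F n = n * c + F 0 := by
  refine Int.leInduction (by simp) fun n hn ih => ?_
  rw [hF (n + 1) (by omega), add_sub_cancel_right, ih]
  push_cast
  noncomm_ring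

def bmFirstIntegral (α₁ α₂ : ℝ) (b : ℤ → ℤ → ℝ) (n : ℤ) : ℝ :=
  -α₂ * (b (n + 1) (-1) * b n 1 + b n (-1) * b (n - 1) 1 + (b n 0) ^ 2) - α₁ * b n 0

theorem bmFirstIntegral_sub_bmFirstIntegral_sub_one (α₁ α₂ : ℝ) (b : ℤ → ℤ → ℝ) (n : ℤ) :
    bmFirstIntegral α₁ α₂ b n - bmFirstIntegral α₁ α₂ b (n - 1) =
      -(α₁ * (b n 0 - b (n - 1) 0)
        + α₂ * (b n 1 * b (n + 1) (-1) + b n 0 * (b n 0 + b (n - 1) 0)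
            - b (n - 1) 0 * (b (n - 1) 0 + b n 0)
            - b (n - 1) (-1) * b (n - 2) 1)) := by
  rw [bmFirstIntegral, bmFirstIntegral, sub_add_cancel, show n - 1 - 1 = n - 2 by ring]
  ring

theorem stationary_BM_first_integral
    (m : ℕ) (α α₁ α₂ : ℝ) (b : ℤ → ℤ → ℝ)
    (hb : ∀ n : ℤ, 1 ≤ n → b n (-1) ≠ 0)
    (h : ∀ n : ℤ, 1 ≤ n →
      ((m : ℝ) + 1) * α * b n (-1)
        + α₁ * b n (-1) * (b n 0 - b (n - 1) 0)
        + α₂ * b n (-1) *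
            (b n 1 * b (n + 1) (-1) + b n 0 * (b n 0 + b (n - 1) 0)
              - b (n - 1) 0 * (b (n - 1) 0 + b n 0)
              - b (n - 1) (-1) * b (n - 2) 1) = 0) :
    ∃ A : ℝ, ∀ n : ℤ, 0 ≤ n →
      -α₂ * (b (n + 1) (-1) * b n 1 + b n (-1) * b (n - 1) 1 + (b n 0) ^ 2)
        - α₁ * b n 0 = ((m : ℝ) + 1) * (n : ℝ) * α + A := by
  have step : ∀ n : ℤ, 1 ≤ n →
      bmFirstIntegral α₁ α₂ b n = bmFirstIntegral α₁ α₂ b (n - 1) + ((m : ℝ) + 1) * α := by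
    intro n hn
    have divided : ((m : ℝ) + 1) * α + α₁ * (b n 0 - b (n - 1) 0)
        + α₂ * (b n 1 * b (n + 1) (-1) + b n 0 * (b n 0 + b (n - 1) 0)
            - b (n - 1) 0 * (b (n - 1) 0 + b n 0)
            - b (n - 1) (-1) * b (n - 2) 1) = 0 :=
      (mul_eq_zero.1 (by linear_combination h n hn)).resolve_left (hb n hn)
    linear_combination bmFirstIntegral_sub_bmFirstIntegral_sub_one α₁ α₂ b n - divided
  refine ⟨bmFirstIntegral α₁ α₂ b 0, fun n hn => ?_⟩
  rw [← bmFirstIntegral, Int.eq_mul_add_of_forall_sub_one step n hn]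
  ring
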